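/- For every ε ∈ (0, 1/2), every real z ≥ 1, every integer k ≥ 1, and every γ ≥ 1, there exists ε'₀ > 0 depending only on ε, z, and γ such that the following holds for all 0 < ε' ≤ ε'₀ and every integer d ≥ 1. Let X ⊆ ℝ^d be finite, let C' ⊆ ℝ^d be nonempty with |C'| ≤ k satisfying Cost(X, C') ≤ γ · Cost(X, C) for every nonempty finite C ⊆ ℝ^d with |C| ≤ k, and suppose for each x ∈ X a point x' ∈ ℝ^d is given with ‖x − x'‖₂ ≤ ε' · dist(x, C'). Let X = X₁ ⊔ … ⊔ X_m be any partition of X. Then for every i ∈ {1,…,m} and every nonempty finite C ⊆ ℝ^d with |C| ≤ k: | Σ_{x∈X_i} dist(x', C)^z − Cost(X_i, C) | ≤ ε · Cost(X, C). -/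

import Mathlib

/-!
Distance to a finite set is 1-Lipschitz, so `|dist(x', C) - dist(x, C)| ≤ ε' dist(x, C')`.
For `a, b ≥ 0` with `|a - b| ≤ δ` and any `s > 0`, splitting according to whether `a` or `δ`
dominates gives `|b^z - a^z| ≤ ((1 + s)^z - 1) a^z + ((1 + s)/s)^z δ^z`. Summing over `X_i`, the
first term is at most `((1 + s)^z - 1) Cost(X, C)` and the second at most
`((1 + s)/s)^z ε'^z γ Cost(X, C)`, because `X_i ⊆ X` and `C'` is a `γ`-approximation. Choosing
`s` and then `ε'` small makes each term at most `ε/2 · Cost(X, C)`.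
-/

open scoped BigOperators

/-- `dSet x C` is the distance from the point `x` to the finite set `C`. -/
noncomputable def dSet {d : ℕ} (x : EuclideanSpace ℝ (Fin d))
    (C : Finset (EuclideanSpace ℝ (Fin d))) : ℝ :=
  sInf ((fun c => dist x c) '' (C : Set (EuclideanSpace ℝ (Fin d))))

/-- `kzCost z X C = Σ_{x ∈ X} dist(x,C)^z`. -/
noncomputable def kzCost {d : ℕ} (z : ℝ) (X C : Finset (EuclideanSpace ℝ (Fin d))) : ℝ :=
  ∑ x ∈ X, dSet x C ^ z

namespace Real

lemma rpow_le_of_le_add {z s u v δ : ℝ} (hz : 0 ≤ z) (hs : 0 < s) (hu : 0 ≤ u) (hv : 0 ≤ v)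
    (hδ : 0 ≤ δ) (h : v ≤ u + δ) :
    v ^ z ≤ (1 + s) ^ z * u ^ z + ((1 + s) / s) ^ z * δ ^ z := by
  have hmax : v ≤ max ((1 + s) * u) ((1 + s) / s * δ) := by
    rcases le_or_gt (δ / s) u with hδu | huδ
    · have : δ ≤ s * u := by rwa [div_le_iff₀' hs] at hδu
      exact le_max_of_le_left (by linarith)
    · have : (1 + s) / s * δ = δ / s + δ := by field_simp
      exact le_max_of_le_right (by linarith)
  calc v ^ z ≤ (max ((1 + s) * u) ((1 + s) / s * δ)) ^ z := by gcongr
    _ = max (((1 + s) * u) ^ z) (((1 + s) / s * δ) ^ z) := by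
        rw [rpow_max (by positivity) (by positivity) hz]
    _ ≤ ((1 + s) * u) ^ z + ((1 + s) / s * δ) ^ z :=
        max_le_add_of_nonneg (by positivity) (by positivity)
    _ = (1 + s) ^ z * u ^ z + ((1 + s) / s) ^ z * δ ^ z := by
        rw [mul_rpow (by positivity) hu, mul_rpow (by positivity) hδ]

lemma abs_rpow_sub_rpow_le {z s a b δ : ℝ} (hz : 0 ≤ z) (hs : 0 < s) (ha : 0 ≤ a)
    (hb : 0 ≤ b) (hab : |a - b| ≤ δ) :
    |b ^ z - a ^ z| ≤ ((1 + s) ^ z - 1) * a ^ z + ((1 + s) / s) ^ z * δ ^ z := by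
  have hδ : 0 ≤ δ := (abs_nonneg _).trans hab
  have hcoef : 0 ≤ (1 + s) ^ z - 1 := sub_nonneg.2 (one_le_rpow (by linarith) hz)
  have hKδ : 0 ≤ ((1 + s) / s) ^ z * δ ^ z := by positivity
  rw [abs_sub_le_iff] at hab ⊢
  constructor
  · linarith [rpow_le_of_le_add hz hs ha hb hδ (by linarith)]
  · rcases le_total a b with hle | hle
    · have : a ^ z ≤ b ^ z := by gcongr
      nlinarith [rpow_nonneg ha z]
    · have hba : b ^ z ≤ a ^ z := by gcongr
      nlinarith [rpow_le_of_le_add hz hs hb ha hδ (by linarith)]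

lemma exists_pos_one_add_rpow_eq {z η : ℝ} (hz : 0 < z) (hη : 0 < η) :
    ∃ s, 0 < s ∧ (1 + s) ^ z = 1 + η := by
  refine ⟨(1 + η) ^ z⁻¹ - 1, ?_, ?_⟩
  · have : 1 < (1 + η) ^ z⁻¹ := one_lt_rpow (by linarith) (inv_pos.2 hz)
    linarith
  · rw [add_sub_cancel, rpow_inv_rpow (by linarith) hz.ne']

end Real

section Cost

variable {d : ℕ}

lemma dSet_eq_infDist (x : EuclideanSpace ℝ (Fin d)) (C : Finset (EuclideanSpace ℝ (Fin d))) :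
    dSet x C = Metric.infDist x (C : Set (EuclideanSpace ℝ (Fin d))) := by
  rw [Metric.infDist_eq_iInf, dSet, Set.image_eq_range]
  rfl

lemma dSet_nonneg (x : EuclideanSpace ℝ (Fin d)) (C : Finset (EuclideanSpace ℝ (Fin d))) :
    0 ≤ dSet x C := by
  rw [dSet_eq_infDist]
  exact Metric.infDist_nonneg

lemma abs_dSet_sub_dSet_le (x y : EuclideanSpace ℝ (Fin d))
    (C : Finset (EuclideanSpace ℝ (Fin d))) : |dSet x C - dSet y C| ≤ dist x y := by
  simpa only [dSet_eq_infDist, NNReal.coe_one, one_mul, Real.dist_eq] using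
    (Metric.lipschitz_infDist_pt _).dist_le_mul x y

lemma kzCost_nonneg (z : ℝ) (X C : Finset (EuclideanSpace ℝ (Fin d))) : 0 ≤ kzCost z X C :=
  Finset.sum_nonneg fun x _ => Real.rpow_nonneg (dSet_nonneg x C) z

lemma kzCost_mono (z : ℝ) {X Y : Finset (EuclideanSpace ℝ (Fin d))}
    (C : Finset (EuclideanSpace ℝ (Fin d))) (h : X ⊆ Y) : kzCost z X C ≤ kzCost z Y C :=
  Finset.sum_le_sum_of_subset_of_nonneg h fun x _ _ => Real.rpow_nonneg (dSet_nonneg x C) z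

lemma abs_sum_rpow_dSet_sub_kzCost_le {z s ε' : ℝ} (hz : 0 ≤ z) (hs : 0 < s) (hε' : 0 ≤ ε')
    {Y C C' : Finset (EuclideanSpace ℝ (Fin d))}
    {f : EuclideanSpace ℝ (Fin d) → EuclideanSpace ℝ (Fin d)}
    (hf : ∀ x ∈ Y, dist x (f x) ≤ ε' * dSet x C') :
    |(∑ x ∈ Y, dSet (f x) C ^ z) - kzCost z Y C| ≤
      ((1 + s) ^ z - 1) * kzCost z Y C + ((1 + s) / s) ^ z * ε' ^ z * kzCost z Y C' := by
  have hpoint : ∀ x ∈ Y, |dSet (f x) C ^ z - dSet x C ^ z| ≤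
      ((1 + s) ^ z - 1) * dSet x C ^ z + ((1 + s) / s) ^ z * ε' ^ z * dSet x C' ^ z := by
    intro x hx
    have h := Real.abs_rpow_sub_rpow_le hz hs (dSet_nonneg x C) (dSet_nonneg (f x) C)
      ((abs_dSet_sub_dSet_le x (f x) C).trans (hf x hx))
    rwa [Real.mul_rpow hε' (dSet_nonneg x C'), ← mul_assoc] at h
  rw [kzCost, kzCost, ← Finset.sum_sub_distrib, Finset.mul_sum, Finset.mul_sum,
    ← Finset.sum_add_distrib]
  exact (Finset.abs_sum_le_sum_abs _ _).trans (Finset.sum_le_sum hpoint)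

end Cost

theorem rounded_offsets_partition_additive_error_general
    (ε : ℝ) (hε0 : 0 < ε) (z : ℝ) (hz : 1 ≤ z)
    (γ : ℝ) (hγ : 1 ≤ γ) :
    ∃ ε'₀ : ℝ, 0 < ε'₀ ∧
      ∀ (k : ℕ), 1 ≤ k → ∀ ε' : ℝ, 0 < ε' → ε' ≤ ε'₀ → ∀ (d : ℕ), 1 ≤ d →
        ∀ (X C' : Finset (EuclideanSpace ℝ (Fin d))), C'.Nonempty → C'.card ≤ k →
          (∀ C : Finset (EuclideanSpace ℝ (Fin d)), C.Nonempty → C.card ≤ k →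
            kzCost z X C' ≤ γ * kzCost z X C) →
          ∀ f : EuclideanSpace ℝ (Fin d) → EuclideanSpace ℝ (Fin d),
            (∀ x ∈ X, dist x (f x) ≤ ε' * dSet x C') →
            ∀ (m : ℕ) (P : Fin m → Finset (EuclideanSpace ℝ (Fin d))),
              (∀ i j, i ≠ j → Disjoint (P i) (P j)) →
              (∀ y, y ∈ X ↔ ∃ i, y ∈ P i) →
              ∀ (i : Fin m) (C : Finset (EuclideanSpace ℝ (Fin d))),
                C.Nonempty → C.card ≤ k →
                |(∑ x ∈ P i, dSet (f x) C ^ z) - kzCost z (P i) C| ≤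
                  ε * kzCost z X C := by
  have hz0 : 0 < z := by linarith
  obtain ⟨s, hs, hsz⟩ := Real.exists_pos_one_add_rpow_eq hz0 (half_pos hε0)
  set K := ((1 + s) / s) ^ z
  have hK : 0 < K := by positivity
  have hγK : 0 < ε / (2 * γ * K) := by positivity
  refine ⟨(ε / (2 * γ * K)) ^ z⁻¹, by positivity, ?_⟩
  intro k _ ε' hε' hε'le d _ X C' _ _ hCost f hf m P _ hcover i C hC hCk
  have hPX : P i ⊆ X := fun y hy => (hcover y).2 ⟨i, hy⟩
  have hε'z : K * ε' ^ z * γ ≤ ε / 2 := by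
    have : ε' ^ z ≤ ε / (2 * γ * K) := by
      simpa only [Real.rpow_inv_rpow hγK.le hz0.ne'] using
        Real.rpow_le_rpow hε'.le hε'le hz0.le
    calc K * ε' ^ z * γ ≤ K * (ε / (2 * γ * K)) * γ := by gcongr
      _ = ε / 2 := by field_simp
  have hXC := kzCost_nonneg z X C
  calc |(∑ x ∈ P i, dSet (f x) C ^ z) - kzCost z (P i) C|
      ≤ ((1 + s) ^ z - 1) * kzCost z (P i) C + K * ε' ^ z * kzCost z (P i) C' :=
        abs_sum_rpow_dSet_sub_kzCost_le hz0.le hs hε'.le fun x hx => hf x (hPX hx)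
    _ ≤ ε / 2 * kzCost z X C + K * ε' ^ z * (γ * kzCost z X C) := by
        rw [hsz, add_sub_cancel_left]
        gcongr
        · exact kzCost_mono z C hPX
        · exact (kzCost_mono z C' hPX).trans (hCost C hC hCk)
    _ ≤ ε / 2 * kzCost z X C + ε / 2 * kzCost z X C := by
        rw [← mul_assoc]
        gcongr
    _ = ε * kzCost z X C := by ring

/-- Rounding offsets with respect to a single global `γ`-approximation `C'` preserves the
clustering cost of each part `X_i` of a partition of `X` up to additive error
`ε·Cost(X,C)`, provided `ε'` is small enough depending only on `ε`, `z`, `γ`. -/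
theorem rounded_offsets_partition_additive_error
    (ε : ℝ) (hε0 : 0 < ε) (hε : ε < 1 / 2) (z : ℝ) (hz : 1 ≤ z)
    (γ : ℝ) (hγ : 1 ≤ γ) :
    ∃ ε'₀ : ℝ, 0 < ε'₀ ∧
      ∀ (k : ℕ), 1 ≤ k → ∀ ε' : ℝ, 0 < ε' → ε' ≤ ε'₀ → ∀ (d : ℕ), 1 ≤ d →
        ∀ (X C' : Finset (EuclideanSpace ℝ (Fin d))), C'.Nonempty → C'.card ≤ k →
          (∀ C : Finset (EuclideanSpace ℝ (Fin d)), C.Nonempty → C.card ≤ k →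
            kzCost z X C' ≤ γ * kzCost z X C) →
          ∀ f : EuclideanSpace ℝ (Fin d) → EuclideanSpace ℝ (Fin d),
            (∀ x ∈ X, dist x (f x) ≤ ε' * dSet x C') →
            ∀ (m : ℕ) (P : Fin m → Finset (EuclideanSpace ℝ (Fin d))),
              (∀ i j, i ≠ j → Disjoint (P i) (P j)) →
              (∀ y, y ∈ X ↔ ∃ i, y ∈ P i) →
              ∀ (i : Fin m) (C : Finset (EuclideanSpace ℝ (Fin d))),
                C.Nonempty → C.card ≤ k →
                |(∑ x ∈ P i, dSet (f x) C ^ z) - kzCost z (P i) C| ≤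
                  ε * kzCost z X C :=
  rounded_offsets_partition_additive_error_general ε hε0 z hz γ hγ
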